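/- Let G be a finite subgroup of (Fin 3 → ℂˣ) of cardinality d which is NOT cyclic. Then the toric ideal I(B₁) of the set B₁ of G-invariant exponent vectors of degree d is generated by quadrics. (The paper states this as Koszulness of the coordinate ring, which it proves equivalent to being quadratic.) -/

import Mathlib

/-!
Write `|G| = e * k` with `e` the exponent of `G`; since `G` is not cyclic, `k ≥ 2`. Whether an
exponent vector is invariant depends only on its residues mod `e`, so `B₁` is the set of vectors
of degree `e * k` in a submonoid of `ℕ³` closed under congruence mod `e`.

A toric ideal is generated by quadrics as soon as any two monomials with the same image are
joined by moves replacing `w_x w_y` by `w_z w_w` with `x + y = z + w`. Because `k ≥ 2`, any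
`x + y` with `x, y ∈ B₁` can be split as `z + w` with `w ≡ 0 (mod e)`, so every monomial is
connected to one in which all factors but one are divisible by `e`. Between two such normal forms,
blocks of `e` units can be moved from one coordinate to another, which connects them.
-/

open MvPolynomial

/-- The size of the support of an exponent vector. -/
def suppCard {n : ℕ} (a : Fin (n + 1) → ℕ) : ℕ :=
  (Finset.univ.filter fun i => a i ≠ 0).card

/-- The toric ideal of a set `Ω` of exponent vectors: the kernel of the `K`-algebra map
sending the variable `w_a` (for `a ∈ Ω`) to the monomial with exponent vector `a`. -/
noncomputable def toricIdeal (K : Type*) [Field K] {n : ℕ}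
    (Ω : Set (Fin (n + 1) → ℕ)) : Ideal (MvPolynomial Ω K) :=
  RingHom.ker
    (aeval (R := K) fun a : Ω => ∏ i, (X i : MvPolynomial (Fin (n + 1)) K) ^ (a.1 i))

/-- `I(Ω)` is generated in degrees at most `k` (each variable `w_a` having degree 1). -/
def genInDegLE (K : Type*) [Field K] {n : ℕ} (Ω : Set (Fin (n + 1) → ℕ)) (k : ℕ) : Prop :=
  toricIdeal K Ω =
    Ideal.span {p : MvPolynomial Ω K | p ∈ toricIdeal K Ω ∧ ∃ m ≤ k, p.IsHomogeneous m}

/-- `I(Ω)` is generated by quadrics: it equals the ideal generated by its homogeneous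
elements of degree 2. -/
def genByQuadrics (K : Type*) [Field K] {n : ℕ} (Ω : Set (Fin (n + 1) → ℕ)) : Prop :=
  toricIdeal K Ω =
    Ideal.span {p : MvPolynomial Ω K | p ∈ toricIdeal K Ω ∧ p.IsHomogeneous 2}

section QuadMove

variable {α : Type*} [AddCommMonoid α] {Ω : Set α}

/-- A multiset of points of `Ω` stands for the monomial `∏ w_a`; a quadratic move replaces a
factor `w_x w_y` by `w_z w_w` with `x + y = z + w`. -/
def QuadMove (M N : Multiset Ω) : Prop :=
  ∃ (C : Multiset Ω) (x y z w : Ω),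
    M = x ::ₘ y ::ₘ C ∧ N = z ::ₘ w ::ₘ C ∧ (x : α) + y = z + w

abbrev QuadConnected : Multiset Ω → Multiset Ω → Prop := Relation.ReflTransGen QuadMove

variable {M N : Multiset Ω}

theorem QuadMove.symm (h : QuadMove M N) : QuadMove N M := by
  obtain ⟨C, x, y, z, w, rfl, rfl, hxy⟩ := h
  exact ⟨C, z, w, x, y, rfl, rfl, hxy.symm⟩

theorem QuadMove.cons (a : Ω) (h : QuadMove M N) : QuadMove (a ::ₘ M) (a ::ₘ N) := by
  obtain ⟨C, x, y, z, w, rfl, rfl, hxy⟩ := h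
  exact ⟨a ::ₘ C, x, y, z, w, by simp only [Multiset.cons_swap a],
    by simp only [Multiset.cons_swap a], hxy⟩

theorem QuadMove.sum_eq (h : QuadMove M N) :
    (M.map Subtype.val).sum = (N.map Subtype.val).sum := by
  obtain ⟨C, x, y, z, w, rfl, rfl, hxy⟩ := h
  simp only [Multiset.map_cons, Multiset.sum_cons, ← add_assoc, hxy]

instance : Std.Symm (QuadMove (Ω := Ω)) := ⟨fun _ _ => QuadMove.symm⟩

theorem QuadConnected.symm (h : QuadConnected M N) : QuadConnected N M :=
  Relation.ReflTransGen.stdSymm.symm _ _ h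

theorem QuadConnected.cons (a : Ω) (h : QuadConnected M N) :
    QuadConnected (a ::ₘ M) (a ::ₘ N) :=
  Relation.ReflTransGen.lift (a ::ₘ ·) (fun _ _ => QuadMove.cons a) _ _ h

theorem QuadConnected.sum_eq (h : QuadConnected M N) :
    (M.map Subtype.val).sum = (N.map Subtype.val).sum := by
  induction h with
  | refl => rfl
  | tail _ hmove ih => exact ih.trans hmove.sum_eq

end QuadMove

theorem MvPolynomial.monomial_one_eq_prod_map_X_toMultiset {σ R : Type*} [CommSemiring R]
    (ν : σ →₀ ℕ) : monomial ν (1 : R) = (ν.toMultiset.map X).prod := by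
  rw [Finsupp.toMultiset_map, Finsupp.prod_toMultiset, Finsupp.prod_mapDomain_index
    (fun _ => pow_zero _) (fun _ _ _ => pow_add _ _ _), monomial_eq, C_1, one_mul]

theorem MvPolynomial.monomial_equivFunOnFinite_symm {σ R : Type*} [Fintype σ] [CommSemiring R]
    (v : σ → ℕ) : monomial (Finsupp.equivFunOnFinite.symm v) (1 : R) = ∏ i, X i ^ v i := by
  rw [monomial_eq, C_1, one_mul, Finsupp.prod_fintype _ _ fun _ => pow_zero _]
  rfl

section Toric

variable {K : Type*} [Field K] {n : ℕ} {Ω : Set (Fin (n + 1) → ℕ)}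

variable (K Ω) in
noncomputable abbrev toricMap : MvPolynomial Ω K →ₐ[K] MvPolynomial (Fin (n + 1)) K :=
  aeval fun a : Ω => ∏ i, X i ^ a.1 i

theorem toricMap_prod_map_X (M : Multiset Ω) :
    toricMap K Ω (M.map X).prod = ∏ i, X i ^ (M.map Subtype.val).sum i := by
  induction M using Multiset.induction_on with
  | empty => simp
  | cons a M ih =>
    simp only [Multiset.map_cons, Multiset.prod_cons, Multiset.sum_cons, map_mul, ih, aeval_X,
      Pi.add_apply, pow_add, Finset.prod_mul_distrib]

theorem toricMap_monomial (ν : Ω →₀ ℕ) (c : K) :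
    toricMap K Ω (monomial ν c) =
      monomial (Finsupp.equivFunOnFinite.symm (ν.toMultiset.map Subtype.val).sum) c := by
  rw [← mul_one c, ← smul_eq_mul, ← smul_monomial, ← smul_monomial, map_smul,
    monomial_one_eq_prod_map_X_toMultiset, toricMap_prod_map_X, monomial_equivFunOnFinite_symm]

theorem QuadConnected.sub_mem_span_quadrics {M N : Multiset Ω} (h : QuadConnected M N) :
    (M.map X).prod - (N.map X).prod ∈
      Ideal.span {p : MvPolynomial Ω K | p ∈ toricIdeal K Ω ∧ p.IsHomogeneous 2} := by
  induction h with
  | refl => simp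
  | @tail B C _ hmove ih =>
    obtain ⟨D, x, y, z, w, rfl, rfl, hxy⟩ := hmove
    have hquad : X x * X y - X z * X w ∈ toricIdeal K Ω := by
      simp [toricIdeal, ← Finset.prod_mul_distrib, ← pow_add, ← Pi.add_apply, hxy]
    have hhom : (X x * X y - X z * X w : MvPolynomial Ω K).IsHomogeneous 2 :=
      ((isHomogeneous_X K x).mul (isHomogeneous_X K y)).sub
        ((isHomogeneous_X K z).mul (isHomogeneous_X K w))
    have := Ideal.add_mem _ ih (Ideal.mul_mem_right (D.map X).prod _
      (Ideal.subset_span ⟨hquad, hhom⟩))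
    convert this using 1
    simp only [Multiset.map_cons, Multiset.prod_cons]
    ring

theorem genByQuadrics_of_quadConnected
    (h : ∀ M N : Multiset Ω,
      (M.map Subtype.val).sum = (N.map Subtype.val).sum → QuadConnected M N) :
    genByQuadrics K Ω := by
  set J := Ideal.span {p : MvPolynomial Ω K | p ∈ toricIdeal K Ω ∧ p.IsHomogeneous 2}
  refine le_antisymm (fun p hp => ?_) (Ideal.span_le.mpr fun p hp => hp.1)
  set s : (Ω →₀ ℕ) → (Fin (n + 1) →₀ ℕ) :=
    fun ν => Finsupp.equivFunOnFinite.symm (ν.toMultiset.map Subtype.val).sum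
  -- `ρ` picks a representative in each fibre of `s`; by connectedness every monomial is
  -- congruent modulo `J` to the representative of its fibre, and these cancel on the kernel.
  set ρ := Function.invFun s
  have hrep (ν : Ω →₀ ℕ) : monomial ν (1 : K) - monomial (ρ (s ν)) 1 ∈ J := by
    rw [monomial_one_eq_prod_map_X_toMultiset, monomial_one_eq_prod_map_X_toMultiset]
    exact (h _ _ (Finsupp.equivFunOnFinite.symm.injective
      (Function.invFun_eq (f := s) ⟨ν, rfl⟩).symm)).sub_mem_span_quadrics
  have hsub (q : MvPolynomial Ω K) :
      q - AddMonoidAlgebra.mapDomain ρ (toricMap K Ω q) ∈ J := by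
    induction q using MvPolynomial.induction_on' with
    | monomial ν c =>
      have hmap : AddMonoidAlgebra.mapDomain ρ (monomial (s ν) c) = monomial (ρ (s ν)) c :=
        AddMonoidAlgebra.mapDomain_single
      rw [toricMap_monomial, hmap, ← mul_one c, ← C_mul_monomial, ← C_mul_monomial, ← mul_sub]
      exact J.mul_mem_left _ (hrep ν)
    | add p q hp hq =>
      rw [map_add, AddMonoidAlgebra.mapDomain_add, add_sub_add_comm]
      exact J.add_mem hp hq
  have := hsub p
  rwa [RingHom.mem_ker.mp hp, AddMonoidAlgebra.mapDomain_zero, sub_zero] at this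

end Toric

theorem Finset.exists_le_sum_eq {ι : Type*} [DecidableEq ι] (s : Finset ι) (c : ι → ℕ) {m : ℕ}
    (hm : m ≤ ∑ i ∈ s, c i) : ∃ q ≤ c, ∑ i ∈ s, q i = m := by
  induction s using Finset.induction_on generalizing m with
  | empty => exact ⟨0, fun _ => Nat.zero_le _, by simp at hm ⊢; omega⟩
  | insert a s has ih =>
    rw [Finset.sum_insert has] at hm
    obtain ⟨q, hqc, hq⟩ := ih (min_le_right m (∑ i ∈ s, c i))
    refine ⟨Function.update q a (m - min m (∑ i ∈ s, c i)), fun i => ?_, ?_⟩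
    · rcases eq_or_ne i a with rfl | hi
      · simp only [Function.update_self]
        omega
      · simpa [hi] using hqc i
    · rw [Finset.sum_insert has, Function.update_self,
        Finset.sum_congr rfl fun i hi => Function.update_of_ne (ne_of_mem_of_not_mem hi has) _ _,
        hq]
      omega

section Transfer

variable {ι : Type*} [DecidableEq ι] {e : ℕ} {i j : ι} {v : ι → ℕ}

def transfer (i j : ι) (e : ℕ) (v : ι → ℕ) : ι → ℕ := v + Pi.single i e - Pi.single j e

theorem transfer_apply_left (hij : i ≠ j) : transfer i j e v i = v i + e := by
  simp [transfer, hij]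

theorem transfer_apply_right (hij : i ≠ j) : transfer i j e v j = v j - e := by
  simp [transfer, hij.symm]

theorem transfer_apply_of_ne {l : ι} (hli : l ≠ i) (hlj : l ≠ j) : transfer i j e v l = v l := by
  simp [transfer, hli, hlj]

theorem modEq_transfer (hij : i ≠ j) (hv : e ≤ v j) (l : ι) :
    transfer i j e v l ≡ v l [MOD e] := by
  rcases eq_or_ne l i with rfl | hli
  · rw [transfer_apply_left hij]
    exact Nat.add_modEq_right
  rcases eq_or_ne l j with rfl | hlj
  · rw [transfer_apply_right hij]
    exact (Nat.modEq_iff_dvd' (Nat.sub_le _ _)).mpr (by simp [Nat.sub_sub_self hv])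
  · rw [transfer_apply_of_ne hli hlj]

theorem transfer_add_transfer {w : ι → ℕ} (hv : e ≤ v j) (hw : e ≤ w i) :
    transfer i j e v + transfer j i e w = v + w := by
  ext l
  simp only [transfer, Pi.add_apply, Pi.sub_apply, Pi.single_apply]
  split_ifs <;> subst_vars <;> omega

end Transfer

section Connectivity

variable {ι : Type*} [Fintype ι] {e k : ℕ}

/-- The residues `u i % e` have total `e * ρ` with `ρ < card ι ≤ k + 1`; `z` is these residues
topped up by multiples of `e`. -/
theorem exists_le_sum_eq_mul_of_dvd (he : 0 < e) (hcard : Fintype.card ι ≤ k + 1)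
    (u : ι → ℕ) (hdvd : e ∣ ∑ i, u i) (hle : e * k ≤ ∑ i, u i) :
    ∃ z ≤ u, (∀ i, e ∣ u i - z i) ∧ ∑ i, z i = e * k := by
  classical
  have hdecomp : ∑ i, u i = e * ∑ i, u i / e + ∑ i, u i % e := by
    rw [Finset.mul_sum, ← Finset.sum_add_distrib]
    exact Finset.sum_congr rfl fun i _ => (Nat.div_add_mod _ _).symm
  obtain ⟨ρ, hρ⟩ : e ∣ ∑ i, u i % e :=
    (Nat.dvd_add_right (dvd_mul_right _ _)).mp (hdecomp ▸ hdvd)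
  have hρk : ρ ≤ k := by
    have hres : ∑ i, u i % e ≤ Fintype.card ι * (e - 1) := by
      simpa using Finset.sum_le_sum fun i (_ : i ∈ Finset.univ) =>
        Nat.le_sub_one_of_lt (Nat.mod_lt (u i) he)
    have : e * ρ < e * (k + 1) := by
      calc e * ρ ≤ (k + 1) * (e - 1) := hρ ▸ hres.trans (Nat.mul_le_mul_right _ hcard)
        _ < e * (k + 1) := by rw [mul_comm]; exact Nat.mul_lt_mul_of_pos_right (by omega) (by omega)
    exact Nat.lt_succ_iff.mp (Nat.lt_of_mul_lt_mul_left this)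
  have hkρ : k ≤ ∑ i, u i / e + ρ := by
    refine Nat.le_of_mul_le_mul_left ?_ he
    rwa [mul_add, ← hρ, ← hdecomp]
  obtain ⟨q, hqc, hq⟩ := Finset.exists_le_sum_eq Finset.univ (fun i => u i / e)
    (m := k - ρ) (by omega)
  have hle_div (i : ι) : e * q i ≤ e * (u i / e) := Nat.mul_le_mul_left e (hqc i)
  refine ⟨fun i => u i % e + e * q i, fun i => ?_, fun i => ⟨u i / e - q i, ?_⟩, ?_⟩
  · have := Nat.div_add_mod (u i) e
    have := hle_div i
    show u i % e + e * q i ≤ u i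
    omega
  · have := Nat.div_add_mod (u i) e
    have := hle_div i
    show u i - (u i % e + e * q i) = e * (u i / e - q i)
    rw [Nat.mul_sub]
    omega
  · rw [Finset.sum_add_distrib, ← Finset.mul_sum, hq, hρ, ← Nat.mul_add, Nat.add_sub_cancel' hρk]

variable (S : AddSubmonoid (ι → ℕ)) in
def degreeSlice (d : ℕ) : Set (ι → ℕ) := {a | a ∈ S ∧ ∑ i, a i = d}

variable {S : AddSubmonoid (ι → ℕ)} {d : ℕ}

theorem exists_add_eq_add_dvd (he : 0 < e) (hcard : Fintype.card ι ≤ k + 1)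
    (hS : ∀ a ∈ S, ∀ b, (∀ i, a i ≡ b i [MOD e]) → b ∈ S) (x y : degreeSlice S (e * k)) :
    ∃ z w : degreeSlice S (e * k), x.1 + y.1 = z.1 + w.1 ∧ ∀ i, e ∣ w.1 i := by
  have hsum : ∑ i, (x.1 + y.1) i = e * k + e * k := by
    simp only [Pi.add_apply, Finset.sum_add_distrib, x.2.2, y.2.2]
  obtain ⟨z, hzu, hdvd, hz⟩ := exists_le_sum_eq_mul_of_dvd he hcard (x.1 + y.1)
    (hsum ▸ dvd_add (dvd_mul_right e k) (dvd_mul_right e k)) (by omega)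
  have hz_mem : z ∈ S := hS _ (S.add_mem x.2.1 y.2.1) _ fun i =>
    ((Nat.modEq_iff_dvd' (hzu i)).mpr (hdvd i)).symm
  have hw_mem : x.1 + y.1 - z ∈ S := hS 0 S.zero_mem _ fun i =>
    (Nat.modEq_zero_iff_dvd.mpr (hdvd i)).symm
  have hw : ∑ i, (x.1 + y.1 - z) i = e * k := by
    simp only [Pi.sub_apply]
    rw [Finset.sum_tsub_distrib _ fun i _ => hzu i, hsum, hz, Nat.add_sub_cancel]
  exact ⟨⟨z, hz_mem, hz⟩, ⟨_, hw_mem, hw⟩, (add_tsub_cancel_of_le hzu).symm, hdvd⟩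

theorem exists_quadConnected_cons_dvd (he : 0 < e) (hcard : Fintype.card ι ≤ k + 1)
    (hS : ∀ a ∈ S, ∀ b, (∀ i, a i ≡ b i [MOD e]) → b ∈ S)
    (M : Multiset (degreeSlice S (e * k))) (x : degreeSlice S (e * k)) :
    ∃ z F, QuadConnected (x ::ₘ M) (z ::ₘ F) ∧ ∀ w ∈ F, ∀ i, e ∣ w.1 i := by
  induction M using Multiset.induction_on generalizing x with
  | empty => exact ⟨x, 0, .refl, by simp⟩
  | cons a M ih =>
    obtain ⟨z₁, w₁, hsum, hw₁⟩ := exists_add_eq_add_dvd he hcard hS x a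
    obtain ⟨z, F, hconn, hF⟩ := ih z₁
    refine ⟨z, w₁ ::ₘ F, .head ⟨M, x, a, z₁, w₁, rfl, rfl, hsum⟩ ?_, ?_⟩
    · simpa only [Multiset.cons_swap w₁] using hconn.cons w₁
    · simpa [hw₁] using hF

theorem transfer_mem_degreeSlice [DecidableEq ι] {i j : ι} {v : ι → ℕ}
    (hS : ∀ a ∈ S, ∀ b, (∀ i, a i ≡ b i [MOD e]) → b ∈ S)
    (hv_mem : v ∈ degreeSlice S d) (hij : i ≠ j) (hv : e ≤ v j) :
    transfer i j e v ∈ degreeSlice S d := by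
  refine ⟨hS v hv_mem.1 _ fun l => (modEq_transfer hij hv l).symm, ?_⟩
  have hle (l : ι) : (Pi.single j e : ι → ℕ) l ≤ v l + (Pi.single i e : ι → ℕ) l := by
    rcases eq_or_ne l j with rfl | hlj
    · simpa using le_add_right hv
    · simp [hlj]
  simp only [transfer, Pi.sub_apply, Pi.add_apply]
  rw [Finset.sum_tsub_distrib _ fun l _ => hle l]
  simp [Finset.sum_add_distrib, hv_mem.2]

theorem dvd_sum_map_val {F : Multiset (degreeSlice S d)} (hF : ∀ w ∈ F, ∀ i, e ∣ w.1 i)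
    (i : ι) : e ∣ (F.map Subtype.val).sum i := by
  rw [Pi.multiset_sum_apply, Multiset.map_map]
  exact Multiset.dvd_sum fun _ h => by
    obtain ⟨w, hw, rfl⟩ := Multiset.mem_map.mp h
    exact hF w hw i

theorem exists_lt_of_sum_eq {f g : ι → ℕ} (hfg : f ≠ g) (h : ∑ i, f i = ∑ i, g i) :
    ∃ i, f i < g i := by
  by_contra! hle
  exact hfg (funext fun i =>
    ((Finset.sum_eq_sum_iff_of_le fun i _ => hle i).mp h.symm i (Finset.mem_univ _)).symm)

theorem exists_mem_le_of_dvd {F : Multiset (degreeSlice S d)} (hF : ∀ w ∈ F, ∀ i, e ∣ w.1 i)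
    {i : ι} (hi : (F.map Subtype.val).sum i ≠ 0) : ∃ w ∈ F, e ≤ w.1 i := by
  rw [Pi.multiset_sum_apply, Multiset.map_map, Ne, Multiset.sum_eq_zero_iff] at hi
  push Not at hi
  obtain ⟨_, hmem, hne⟩ := hi
  obtain ⟨w, hw, rfl⟩ := Multiset.mem_map.mp hmem
  exact ⟨w, hw, Nat.le_of_dvd (Nat.pos_of_ne_zero hne) (hF w hw i)⟩

theorem sum_tsub_transfer_lt [DecidableEq ι] {x y : ι → ℕ} {i j : ι} (he : 0 < e) (hij : i ≠ j)
    (hi : y i < x i) (hj : x j + e ≤ y j) :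
    ∑ l, (x l - transfer i j e y l) < ∑ l, (x l - y l) := by
  refine Finset.sum_lt_sum (fun l _ => ?_) ⟨i, Finset.mem_univ _, ?_⟩
  · rcases eq_or_ne l j with rfl | hlj
    · rw [transfer_apply_right hij]
      omega
    rcases eq_or_ne l i with rfl | hli
    · rw [transfer_apply_left hij]
      omega
    · rw [transfer_apply_of_ne hli hlj]
  · rw [transfer_apply_left hij]
    omega

/-- The move trades `e` units of a coordinate where `y` exceeds `x` against `e` units of a
coordinate where it falls short, with a point of `F` as partner. -/
theorem exists_quadMove_cons_of_modEq (he : 0 < e)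
    (hS : ∀ a ∈ S, ∀ b, (∀ i, a i ≡ b i [MOD e]) → b ∈ S) {x y : degreeSlice S d} (hyx : y ≠ x)
    {F : Multiset (degreeSlice S d)} (hF : ∀ w ∈ F, ∀ i, e ∣ w.1 i)
    (hxy : ∀ i, y.1 i ≡ x.1 i [MOD e]) (hle : x.1 ≤ y.1 + (F.map Subtype.val).sum) :
    ∃ y' F', QuadMove (y ::ₘ F) (y' ::ₘ F') ∧ (∀ w ∈ F', ∀ i, e ∣ w.1 i) ∧
      (∀ i, y'.1 i ≡ x.1 i [MOD e]) ∧ x.1 ≤ y'.1 + (F'.map Subtype.val).sum ∧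
      ∑ i, (x.1 i - y'.1 i) < ∑ i, (x.1 i - y.1 i) := by
  classical
  have hsum : ∑ i, y.1 i = ∑ i, x.1 i := y.2.2.trans x.2.2.symm
  obtain ⟨i, hi⟩ := exists_lt_of_sum_eq (Subtype.coe_ne_coe.mpr hyx) hsum
  obtain ⟨j, hj⟩ := exists_lt_of_sum_eq (Subtype.coe_ne_coe.mpr hyx.symm) hsum.symm
  have hij : i ≠ j := by rintro rfl; omega
  have hgap_j := (hxy j).symm.add_le_of_lt hj
  have hle_i : x.1 i ≤ y.1 i + (F.map Subtype.val).sum i := hle i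
  obtain ⟨w, hwF, hwi⟩ := exists_mem_le_of_dvd hF (i := i) (by omega)
  obtain ⟨F₂, rfl⟩ := Multiset.exists_cons_of_mem hwF
  set y' : degreeSlice S d := ⟨_, transfer_mem_degreeSlice hS y.2 hij (by omega)⟩
  set w' : degreeSlice S d := ⟨_, transfer_mem_degreeSlice hS w.2 hij.symm hwi⟩
  have hexch : y'.1 + w'.1 = y.1 + w.1 := transfer_add_transfer (by omega) hwi
  have hw' : ∀ l, e ∣ w'.1 l := fun l =>
    ((modEq_transfer hij.symm hwi l).dvd_iff dvd_rfl).mpr (hF w (Multiset.mem_cons_self _ _) l)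
  refine ⟨y', w' ::ₘ F₂, ⟨F₂, y, w, y', w', rfl, rfl, hexch.symm⟩, ?_,
    fun l => (modEq_transfer hij (by omega) l).trans (hxy l), ?_,
    sum_tsub_transfer_lt he hij hi hgap_j⟩
  · simpa [hw'] using fun u hu => hF u (Multiset.mem_cons_of_mem hu)
  · simpa [← add_assoc, hexch] using hle

theorem exists_quadConnected_cons_of_modEq (he : 0 < e)
    (hS : ∀ a ∈ S, ∀ b, (∀ i, a i ≡ b i [MOD e]) → b ∈ S) (x y : degreeSlice S d)
    (F : Multiset (degreeSlice S d)) (hF : ∀ w ∈ F, ∀ i, e ∣ w.1 i)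
    (hxy : ∀ i, y.1 i ≡ x.1 i [MOD e]) (hle : x.1 ≤ y.1 + (F.map Subtype.val).sum) :
    ∃ F', QuadConnected (y ::ₘ F) (x ::ₘ F') ∧ ∀ w ∈ F', ∀ i, e ∣ w.1 i := by
  induction hn : ∑ i, (x.1 i - y.1 i) using Nat.strong_induction_on generalizing y F with
  | _ n ih =>
  by_cases hyx : y = x
  · exact ⟨F, hyx ▸ .refl, hF⟩
  obtain ⟨y', F₁, hmove, hF₁, hxy', hle', hlt⟩ := exists_quadMove_cons_of_modEq he hS hyx hF hxy hle
  obtain ⟨F', hconn, hF'⟩ := ih _ (hn ▸ hlt) y' F₁ hF₁ hxy' hle' rfl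
  exact ⟨F', .head hmove hconn, hF'⟩

theorem sum_sum_map_val (M : Multiset (degreeSlice S d)) :
    ∑ i, (M.map Subtype.val).sum i = Multiset.card M * d := by
  induction M using Multiset.induction_on with
  | empty => simp
  | cons a M ih =>
    simp only [Multiset.map_cons, Multiset.sum_cons, Pi.add_apply, Finset.sum_add_distrib, ih,
      a.2.2, Multiset.card_cons]
    ring

theorem card_eq_of_sum_map_val_eq (hd : 0 < d) {M N : Multiset (degreeSlice S d)}
    (h : (M.map Subtype.val).sum = (N.map Subtype.val).sum) :
    Multiset.card M = Multiset.card N := by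
  have := sum_sum_map_val M
  rw [h, sum_sum_map_val] at this
  exact (Nat.eq_of_mul_eq_mul_right hd this).symm

theorem exists_quadConnected_cons_of_sum_eq (he : 0 < e)
    (hS : ∀ a ∈ S, ∀ b, (∀ i, a i ≡ b i [MOD e]) → b ∈ S) {x y : degreeSlice S d}
    {M N : Multiset (degreeSlice S d)} (hM : ∀ w ∈ M, ∀ i, e ∣ w.1 i)
    (hN : ∀ w ∈ N, ∀ i, e ∣ w.1 i)
    (h : ((x ::ₘ M).map Subtype.val).sum = ((y ::ₘ N).map Subtype.val).sum) :
    ∃ G, QuadConnected (y ::ₘ N) (x ::ₘ G) ∧ (∀ w ∈ G, ∀ i, e ∣ w.1 i) ∧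
      (G.map Subtype.val).sum = (M.map Subtype.val).sum := by
  simp only [Multiset.map_cons, Multiset.sum_cons] at h
  have hxy (i : ι) : y.1 i ≡ x.1 i [MOD e] := by
    refine Nat.ModEq.add_right_cancel (c := (N.map Subtype.val).sum i)
      (d := (M.map Subtype.val).sum i) ?_ (by rw [← Pi.add_apply, ← Pi.add_apply, h])
    exact (Nat.modEq_zero_iff_dvd.mpr (dvd_sum_map_val hN i)).trans
      (Nat.modEq_zero_iff_dvd.mpr (dvd_sum_map_val hM i)).symm
  obtain ⟨G, hconn, hG⟩ :=
    exists_quadConnected_cons_of_modEq he hS x y N hN hxy (h ▸ le_self_add)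
  refine ⟨G, hconn, hG, add_left_cancel (a := x.1) ?_⟩
  simpa [h] using hconn.sum_eq.symm

theorem quadConnected_cons_of_dvd (he : 0 < e) (hk : 0 < k)
    (hS : ∀ a ∈ S, ∀ b, (∀ i, a i ≡ b i [MOD e]) → b ∈ S)
    (M : Multiset (degreeSlice S (e * k))) :
    ∀ (N : Multiset (degreeSlice S (e * k))) (x y : degreeSlice S (e * k)),
      (∀ w ∈ M, ∀ i, e ∣ w.1 i) → (∀ w ∈ N, ∀ i, e ∣ w.1 i) →
      ((x ::ₘ M).map Subtype.val).sum = ((y ::ₘ N).map Subtype.val).sum →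
      QuadConnected (x ::ₘ M) (y ::ₘ N) := by
  induction M using Multiset.induction_on with
  | empty =>
    intro N x y _ hN h
    obtain ⟨G, hconn, -, hG⟩ := exists_quadConnected_cons_of_sum_eq he hS (by simp) hN h
    obtain rfl : G = 0 := Multiset.card_eq_zero.mp (card_eq_of_sum_map_val_eq (by positivity) hG)
    exact hconn.symm
  | cons m M ih =>
    intro N x y hM hN h
    obtain ⟨G, hconn, hGdvd, hG⟩ := exists_quadConnected_cons_of_sum_eq he hS hM hN h
    obtain ⟨g, G', rfl, -⟩ := Multiset.card_eq_succ_iff.mp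
      ((card_eq_of_sum_map_val_eq (by positivity) hG).trans (Multiset.card_cons m M))
    have hM' : ∀ w ∈ M, ∀ i, e ∣ w.1 i := fun w hw => hM w (Multiset.mem_cons_of_mem hw)
    have hG' : ∀ w ∈ G', ∀ i, e ∣ w.1 i := fun w hw => hGdvd w (Multiset.mem_cons_of_mem hw)
    exact ((ih G' m g hM' hG' hG.symm).cons x).trans hconn.symm

theorem quadConnected_of_sum_map_val_eq (he : 0 < e) (hk : 0 < k)
    (hcard : Fintype.card ι ≤ k + 1) (hS : ∀ a ∈ S, ∀ b, (∀ i, a i ≡ b i [MOD e]) → b ∈ S)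
    {M N : Multiset (degreeSlice S (e * k))}
    (h : (M.map Subtype.val).sum = (N.map Subtype.val).sum) : QuadConnected M N := by
  have hcardMN := card_eq_of_sum_map_val_eq (by positivity) h
  rcases M.empty_or_exists_mem with rfl | ⟨x, hx⟩
  · obtain rfl := Multiset.card_eq_zero.mp hcardMN.symm
    exact .refl
  obtain ⟨M', rfl⟩ := Multiset.exists_cons_of_mem hx
  obtain ⟨y, N', rfl, -⟩ :=
    Multiset.card_eq_succ_iff.mp (hcardMN.symm.trans (Multiset.card_cons x M'))
  obtain ⟨z, F, hM, hF⟩ := exists_quadConnected_cons_dvd he hcard hS M' x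
  obtain ⟨z', F', hN, hF'⟩ := exists_quadConnected_cons_dvd he hcard hS N' y
  exact hM.trans ((quadConnected_cons_of_dvd he hk hS F F' z z' hF hF'
    (hM.sum_eq.symm.trans (h.trans hN.sum_eq))).trans hN.symm)

end Connectivity

section Invariants

variable {ι M : Type*} [Fintype ι] [CommMonoid M]

def invariantExponents (G : Set (ι → M)) : AddSubmonoid (ι → ℕ) where
  carrier := {a | ∀ g ∈ G, ∏ i, g i ^ a i = 1}
  add_mem' ha hb g hg := by
    simp only [Pi.add_apply, pow_add, Finset.prod_mul_distrib, ha g hg, hb g hg, one_mul]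
  zero_mem' := by simp

theorem mem_invariantExponents_of_modEq {G : Set (ι → M)} {e : ℕ} (hG : ∀ g ∈ G, g ^ e = 1)
    {a : ι → ℕ} (ha : a ∈ invariantExponents G) (b : ι → ℕ) (hab : ∀ i, a i ≡ b i [MOD e]) :
    b ∈ invariantExponents G := fun g hg => by
  have hgi (i : ι) : g i ^ e = 1 := by rw [← Pi.pow_apply, hG g hg, Pi.one_apply]
  rw [← ha g hg]
  refine Finset.prod_congr rfl fun i _ => ?_
  rw [pow_eq_pow_mod _ (hgi i), pow_eq_pow_mod (a i) (hgi i), hab i]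

end Invariants

/-- for a finite non-cyclic diagonal abelian group `G ⊆ GL(3,ℂ)` of order
`d`, the toric ideal of the set of `G`-invariant exponent vectors of degree `d` is
generated by quadrics. -/
theorem stmt10 (G : Subgroup (Fin 3 → ℂˣ)) [Finite G] (hG : ¬ IsCyclic G) :
    genByQuadrics ℂ (n := 2) {a : Fin 3 → ℕ |
        (∀ g ∈ G, ∏ i, (g i) ^ (a i) = 1) ∧ ∑ i, a i = Nat.card G} := by
  obtain ⟨k, hk⟩ := Group.exponent_dvd_nat_card (G := G)
  have he : 0 < Monoid.exponent G := Monoid.ExponentExists.of_finite.exponent_pos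
  have hk2 : 2 ≤ k := by
    have hne : Monoid.exponent G ≠ Nat.card G := fun h => hG (IsCyclic.of_exponent_eq_card h)
    have := Nat.card_pos (α := G)
    rcases k with _ | _ | k <;> simp_all
  have hpow : ∀ g ∈ (G : Set (Fin 3 → ℂˣ)), g ^ Monoid.exponent G = 1 := fun g hg =>
    congrArg Subtype.val (Monoid.pow_exponent_eq_one (⟨g, hg⟩ : G))
  rw [hk]
  exact genByQuadrics_of_quadConnected fun M N h =>
    quadConnected_of_sum_map_val_eq he (by omega) (by simpa using hk2)
      (fun _ ha => mem_invariantExponents_of_modEq hpow ha) h
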